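/- A graph G is square-stable if and only if there exists a maximum stable set S₀ of G with the property that for every stable set A of G disjoint from S₀, there exists a subset S* ⊆ S₀ such that A ∪ S* is a maximum stable set of G. -/

import Mathlib

open SimpleGraph

attribute [local instance] Classical.propDecidable

variable {V : Type*}

/-- A stable (independent) set: pairwise non-adjacent vertices. -/
def IsStable (G : SimpleGraph V) (S : Finset V) : Prop :=
  ∀ ⦃a⦄, a ∈ S → ∀ ⦃b⦄, b ∈ S → ¬ G.Adj a b

/-- The stability (independence) number α(G). -/
noncomputable def alpha [Fintype V] (G : SimpleGraph V) : ℕ :=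
  (Finset.univ.powerset.filter (fun S => IsStable G S)).sup Finset.card

/-- A maximum stable set, i.e. a member of Ω(G). -/
def IsMaxStable [Fintype V] (G : SimpleGraph V) (S : Finset V) : Prop :=
  IsStable G S ∧ S.card = alpha G

/-- The square G² of a graph: distinct vertices adjacent iff at distance ≤ 2. -/
def square (G : SimpleGraph V) : SimpleGraph V where
  Adj u v := u ≠ v ∧ (G.Adj u v ∨ ∃ w, G.Adj u w ∧ G.Adj w v)
  symm := by
    constructor
    rintro u v ⟨h, h2⟩
    refine ⟨h.symm, ?_⟩
    rcases h2 with h2 | ⟨w, hw1, hw2⟩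
    · exact Or.inl h2.symm
    · exact Or.inr ⟨w, hw2.symm, hw1.symm⟩
  loopless := by constructor; rintro u ⟨h, _⟩; exact h rfl

/-- G is α-square-stable if α(G) = α(G²). -/
def SquareStable [Fintype V] (G : SimpleGraph V) : Prop :=
  alpha G = alpha (square G)

/-- The maximum matching size μ(G). -/
noncomputable def mu [Fintype V] (G : SimpleGraph V) : ℕ :=
  sSup {n | ∃ M : G.Subgraph, M.IsMatching ∧ M.verts.ncard = 2 * n}

/-- f realizes a matching of A into S: it sends each a ∈ A to a distinct
neighbour in S (so the corresponding edges form a matching ⊆ (A,S) saturating A). -/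
def MatchedInto (G : SimpleGraph V) (A S : Finset V) (f : V → V) : Prop :=
  (∀ a ∈ A, f a ∈ S ∧ G.Adj a (f a)) ∧ ∀ a ∈ A, ∀ b ∈ A, f a = f b → a = b

/-- Well-covered: no isolated vertices, and every maximal stable set is maximum. -/
def WellCovered [Fintype V] (G : SimpleGraph V) : Prop :=
  (∀ v : V, ∃ w, G.Adj v w) ∧
    ∀ S : Finset V, IsStable G S → (∀ T : Finset V, IsStable G T → S ⊆ T → S = T) →
      S.card = alpha G

/-- Very well-covered: well-covered and |V(G)| = 2α(G). -/
def VeryWellCovered [Fintype V] (G : SimpleGraph V) : Prop :=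
  WellCovered G ∧ Fintype.card V = 2 * alpha G

/-- The set of pendant (degree-one) vertices of G. -/
noncomputable def pendants [Fintype V] (G : SimpleGraph V) : Finset V :=
  Finset.univ.filter (fun v => G.degree v = 1)

/-- G has a perfect matching consisting of pendant edges. -/
def HasPendantPerfectMatching [Fintype V] (G : SimpleGraph V) : Prop :=
  ∃ M : G.Subgraph, M.IsPerfectMatching ∧
    ∀ a b : V, M.Adj a b → G.degree a = 1 ∨ G.degree b = 1

/-- The star K_{1,n}: vertex 0 is the center, adjacent to n leaves. -/
def starGraph (n : ℕ) : SimpleGraph (Fin (n + 1)) where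
  Adj u v := u ≠ v ∧ (u = 0 ∨ v = 0)
  symm := by constructor; rintro u v ⟨h1, h2⟩; exact ⟨h1.symm, h2.symm⟩
  loopless := by constructor; rintro u ⟨h, _⟩; exact h rfl

/-!
Since α(G²) ≤ α(G), the graph G is square-stable iff some S₀ ∈ Ω(G) is stable in
G², i.e. no two vertices of S₀ have a common neighbour. If so, then for a stable set A disjoint
from S₀ the vertices of S₀ with a neighbour in A have pairwise distinct neighbours in A, so
dropping them from S₀ loses at most |A| vertices and A together with the rest of S₀ is a maximum
stable set. Conversely, if s, t ∈ S₀ had a common neighbour w, then taking A = {w} forces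
S* ⊆ S₀ \ {s, t}, and |{w} ∪ S*| < |S₀|.
-/

section

variable {G : SimpleGraph V}

lemma IsStable.card_le_alpha [Fintype V] {S : Finset V} (h : IsStable G S) :
    S.card ≤ alpha G :=
  Finset.le_sup (Finset.mem_filter.2 ⟨by simp, h⟩)

lemma exists_isMaxStable [Fintype V] (G : SimpleGraph V) : ∃ S, IsMaxStable G S := by
  obtain ⟨S, hS, h⟩ := Finset.exists_mem_eq_sup
    (Finset.univ.powerset.filter (fun S => IsStable G S)) ⟨∅, by simp [IsStable]⟩ Finset.card
  exact ⟨S, (Finset.mem_filter.1 hS).2, h.symm⟩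

lemma IsStable.of_square {S : Finset V} (h : IsStable (square G) S) : IsStable G S :=
  fun _ ha _ hb hab => h ha hb ⟨G.ne_of_adj hab, Or.inl hab⟩

lemma alpha_square_le [Fintype V] (G : SimpleGraph V) : alpha (square G) ≤ alpha G :=
  Finset.sup_le fun _ hS => (Finset.mem_filter.1 hS).2.of_square.card_le_alpha

lemma squareStable_iff_exists_isMaxStable_isStable_square [Fintype V] :
    SquareStable G ↔ ∃ S, IsMaxStable G S ∧ IsStable (square G) S := by
  constructor
  · intro hsq
    obtain ⟨S, hS, hcard⟩ := exists_isMaxStable (square G)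
    exact ⟨S, ⟨hS.of_square, hcard.trans hsq.symm⟩, hS⟩
  · rintro ⟨S, ⟨-, hcard⟩, hS⟩
    exact le_antisymm (hcard ▸ hS.card_le_alpha) (alpha_square_le G)

lemma IsStable.card_filter_exists_adj_le {S : Finset V} (hS : IsStable (square G) S)
    (A : Finset V) : (S.filter fun s => ∃ a ∈ A, G.Adj a s).card ≤ A.card := by
  refine Finset.card_le_card_of_forall_subsingleton (fun s a => G.Adj a s)
    (fun s hs => (Finset.mem_filter.1 hs).2) ?_
  rintro a - s ⟨hs, hsa⟩ t ⟨ht, hta⟩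
  by_contra hst
  exact hS (Finset.mem_filter.1 hs).1 (Finset.mem_filter.1 ht).1 ⟨hst, Or.inr ⟨a, hsa.symm, hta⟩⟩

lemma IsStable.union_filter_not_exists_adj [DecidableEq V] {A S : Finset V}
    (hA : IsStable G A) (hS : IsStable G S) :
    IsStable G (A ∪ S.filter fun s => ¬ ∃ a ∈ A, G.Adj a s) := by
  intro x hx y hy hxy
  simp only [Finset.mem_union, Finset.mem_filter] at hx hy
  rcases hx with hx | ⟨hxS, hx⟩ <;> rcases hy with hy | ⟨hyS, hy⟩
  · exact hA hx hy hxy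
  · exact hy ⟨x, hx, hxy⟩
  · exact hx ⟨y, hy, hxy.symm⟩
  · exact hS hxS hyS hxy

lemma IsMaxStable.exists_subset_isMaxStable_union [Fintype V] [DecidableEq V] {S₀ A : Finset V}
    (hS₀ : IsMaxStable G S₀) (hS₀sq : IsStable (square G) S₀) (hA : IsStable G A)
    (hdisj : Disjoint A S₀) : ∃ S' ⊆ S₀, IsMaxStable G (A ∪ S') := by
  set S' := S₀.filter fun s => ¬ ∃ a ∈ A, G.Adj a s
  have hS' : S' ⊆ S₀ := Finset.filter_subset _ _
  have hstable : IsStable G (A ∪ S') := hA.union_filter_not_exists_adj hS₀.1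
  refine ⟨S', hS', hstable, le_antisymm hstable.card_le_alpha ?_⟩
  have hsplit : (S₀.filter fun s => ∃ a ∈ A, G.Adj a s).card + S'.card = S₀.card :=
    S₀.card_filter_add_card_filter_not _
  have hlost := hS₀sq.card_filter_exists_adj_le A
  rw [Finset.card_union_of_disjoint (hdisj.mono_right hS'), ← hS₀.2]
  omega

lemma IsMaxStable.isStable_square [Fintype V] [DecidableEq V] {S₀ : Finset V}
    (hS₀ : IsMaxStable G S₀)
    (h : ∀ A : Finset V, IsStable G A → Disjoint A S₀ → ∃ S' ⊆ S₀, IsMaxStable G (A ∪ S')) :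
    IsStable (square G) S₀ := by
  rintro s hs t ht ⟨hst, hadj | ⟨w, hsw, hwt⟩⟩
  · exact hS₀.1 hs ht hadj
  have hw : w ∉ S₀ := fun hw => hS₀.1 hs hw hsw
  obtain ⟨S', hS', hstable, hcard⟩ :=
    h {w} (fun a ha b hb => by simp_all) (Finset.disjoint_singleton_left.2 hw)
  have hwS' : w ∈ {w} ∪ S' := by simp
  have hS'sub : S' ⊆ (S₀.erase s).erase t := by
    intro x hx
    have hx' : x ∈ {w} ∪ S' := Finset.mem_union_right _ hx
    refine Finset.mem_erase.2 ⟨?_, Finset.mem_erase.2 ⟨?_, hS' hx⟩⟩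
    · rintro rfl; exact hstable hwS' hx' hwt
    · rintro rfl; exact hstable hwS' hx' hsw.symm
  have hle := Finset.card_le_card hS'sub
  rw [Finset.card_erase_of_mem (Finset.mem_erase.2 ⟨Ne.symm hst, ht⟩),
    Finset.card_erase_of_mem hs] at hle
  have hunion := Finset.card_union_le {w} S'
  have htwo : 2 ≤ S₀.card := by
    simpa [hst] using
      Finset.card_le_card (Finset.insert_subset hs (Finset.singleton_subset_iff.2 ht))
  rw [Finset.card_singleton] at hunion
  have hS₀card := hS₀.2
  omega

end

/-- G is square-stable iff some maximum stable set S₀ satisfies: for every stable set A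
disjoint from S₀ there is S* ⊆ S₀ with A ∪ S* a maximum stable set. -/
theorem stmt14 [Fintype V] [DecidableEq V] (G : SimpleGraph V) :
    SquareStable G ↔
      ∃ S₀ : Finset V, IsMaxStable G S₀ ∧
        ∀ A : Finset V, IsStable G A → Disjoint A S₀ →
          ∃ S' ⊆ S₀, IsMaxStable G (A ∪ S') := by
  rw [squareStable_iff_exists_isMaxStable_isStable_square]
  refine exists_congr fun S₀ => ⟨?_, ?_⟩
  · rintro ⟨hS₀, hsq⟩
    exact ⟨hS₀, fun A hA hdisj => hS₀.exists_subset_isMaxStable_union hsq hA hdisj⟩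
  · rintro ⟨hS₀, h⟩
    exact ⟨hS₀, hS₀.isStable_square h⟩
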